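/- arXiv:2602.14185 — 2 statements merged into one kernel-verified Lean document; each statement's English description precedes it below -/
import Mathlib

section
/- Lemma (trajectory bounds for Perturbed GDA on the hard OS instance). Let ℓ, D_Y, r_y > 0, consider the hard OS instance, and run Perturbed GDA on f̃(x,y) = f(x,y) − (r_y/2)y² with step sizes α, c > 0 satisfying ℓc < 1, initialized at (x_0, y_0) with |x_0| ≤ 1 and y_0 ∈ [0, D_Y]. Then for every t ∈ ℕ: (i) |x_t| ≤ 1 and y_t ∈ [0, D_Y]; (ii) |x_t| ≥ (1 − ℓ·c·D_Y/(D_Y + 1))^t·|x_0|. -/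
noncomputable section

/-- The function `h` of the hard OS instance. -/
def hOS (l Dy : ℝ) (x : ℝ) : ℝ :=
  if |x| ≤ 1 then l / (2 * (Dy + 1)) * x ^ 2
  else if |x| < 2 then l / (Dy + 1) - l / (2 * (Dy + 1)) * (|x| - 2) ^ 2
  else l / (Dy + 1)

/-- The derivative of `hOS` in `x`. -/
def hOS' (l Dy : ℝ) (x : ℝ) : ℝ :=
  if |x| ≤ 1 then l / (Dy + 1) * x
  else if |x| < 2 then -(l / (Dy + 1)) * (|x| - 2) * Real.sign x
  else 0

/-- Metric projection of `v` onto the interval `[0, Dy]`. -/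
def projI (Dy v : ℝ) : ℝ := max 0 (min Dy v)

/-- Value function `Φ(z) = max_{y ∈ [0, Dy]} h(z)·y` of the hard OS instance. -/
def PhiOS (l Dy : ℝ) (z : ℝ) : ℝ :=
  sSup ((fun y => hOS l Dy z * y) '' Set.Icc (0 : ℝ) Dy)

/-- `x` is an `ε`-optimization-stationary point of the hard OS instance:
the minimizer `p` of `Φ(z) + ℓ(z − x)²` over `z ∈ ℝ` satisfies `|p − x| ≤ ε/(2ℓ)`. -/
def IsOS1 (l Dy ε x : ℝ) : Prop :=
  ∃ p : ℝ, (∀ z : ℝ, PhiOS l Dy p + l * (p - x) ^ 2 ≤ PhiOS l Dy z + l * (z - x) ^ 2) ∧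
    |p - x| ≤ ε / (2 * l)

/-!
On `|x| ≤ 1` the function `h` is the quadratic `ℓ x² / (2(D_Y + 1))`, so one x-step of GDA multiplies
`x` by `1 - c ℓ y / (D_Y + 1)`, which lies in `[1 - ℓ c D_Y / (D_Y + 1), 1]` for `y ∈ [0, D_Y]`, a
nonnegative interval since `ℓ c < 1`. Hence `|x_t|` never increases (so the iterates stay in the
quadratic region) and shrinks by at most that factor per step, while the projection keeps `y_t`
in `[0, D_Y]`.
-/

theorem projI_mem_Icc {Dy : ℝ} (hDy : 0 ≤ Dy) (v : ℝ) : projI Dy v ∈ Set.Icc 0 Dy :=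
  ⟨le_max_left _ _, max_le hDy (min_le_left _ _)⟩

theorem hOS'_of_abs_le_one {x : ℝ} (l Dy : ℝ) (hx : |x| ≤ 1) : hOS' l Dy x = l / (Dy + 1) * x := by
  simp [hOS', hx]

theorem sub_mul_hOS'_of_abs_le_one {x : ℝ} (l Dy c y : ℝ) (hx : |x| ≤ 1) :
    x - c * (hOS' l Dy x * y) = x * (1 - c * (l / (Dy + 1)) * y) := by
  rw [hOS'_of_abs_le_one l Dy hx]
  ring

theorem abs_mul_one_sub_mul_bounds {x k y D : ℝ} (hk : 0 ≤ k) (hy : y ∈ Set.Icc 0 D)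
    (hkD : k * D ≤ 1) : (1 - k * D) * |x| ≤ |x * (1 - k * y)| ∧ |x * (1 - k * y)| ≤ |x| := by
  have hky : k * y ≤ k * D := mul_le_mul_of_nonneg_left hy.2 hk
  have hfactor : 0 ≤ 1 - k * y := by linarith
  rw [abs_mul, abs_of_nonneg hfactor]
  constructor
  · rw [mul_comm]
    exact mul_le_mul_of_nonneg_left (by linarith) (abs_nonneg x)
  · exact mul_le_of_le_one_right (abs_nonneg x) (by linarith [mul_nonneg hk hy.1])

theorem mul_div_add_one_le_one {a D : ℝ} (ha : a < 1) (hD : 0 < D) : a * D / (D + 1) ≤ 1 := by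
  rw [div_le_one (by linarith)]
  nlinarith

theorem perturbed_gda_hard_os_trajectory_general
    (l Dy ry α c : ℝ) (xs ys : ℕ → ℝ)
    (hl : 0 < l) (hDy : 0 < Dy)
    (hc : 0 < c) (hlc : l * c < 1)
    -- initialization
    (hx0 : |xs 0| ≤ 1) (hy0 : ys 0 ∈ Set.Icc 0 Dy)
    -- Perturbed GDA on f̃(x,y) = h(x)·y − (r_y/2) y²
    (hxrec : ∀ t, xs (t + 1) = xs t - c * (hOS' l Dy (xs t) * ys t))
    (hyrec : ∀ t, ys (t + 1) = projI Dy (ys t + α * (hOS l Dy (xs (t + 1)) - ry * ys t))) :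
    ∀ t : ℕ,
      (|xs t| ≤ 1 ∧ ys t ∈ Set.Icc 0 Dy) ∧
      (1 - l * c * Dy / (Dy + 1)) ^ t * |xs 0| ≤ |xs t| := by
  set k := c * (l / (Dy + 1))
  have hk : 0 ≤ k := by positivity
  have hkD : k * Dy = l * c * Dy / (Dy + 1) := by ring
  have hkD_le : k * Dy ≤ 1 := hkD ▸ mul_div_add_one_le_one hlc hDy
  rw [← hkD]
  intro t
  induction t with
  | zero => simp [hx0, hy0]
  | succ t ih =>
    obtain ⟨⟨hx, hy⟩, hlow⟩ := ih
    obtain ⟨hstep_lower, hstep_upper⟩ := abs_mul_one_sub_mul_bounds (x := xs t) hk hy hkD_le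
    rw [← sub_mul_hOS'_of_abs_le_one l Dy c (ys t) hx, ← hxrec] at hstep_lower hstep_upper
    refine ⟨⟨hstep_upper.trans hx, hyrec t ▸ projI_mem_Icc hDy.le _⟩, ?_⟩
    calc (1 - k * Dy) ^ (t + 1) * |xs 0| = (1 - k * Dy) * ((1 - k * Dy) ^ t * |xs 0|) := by ring
      _ ≤ (1 - k * Dy) * |xs t| := mul_le_mul_of_nonneg_left hlow (by linarith)
      _ ≤ |xs (t + 1)| := hstep_lower

/-- Trajectory bounds for Perturbed GDA on the hard OS instance. -/
theorem perturbed_gda_hard_os_trajectory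
    (l Dy ry α c : ℝ) (xs ys : ℕ → ℝ)
    (hl : 0 < l) (hDy : 0 < Dy) (hry : 0 < ry)
    (hα : 0 < α) (hc : 0 < c) (hlc : l * c < 1)
    -- initialization
    (hx0 : |xs 0| ≤ 1) (hy0 : ys 0 ∈ Set.Icc 0 Dy)
    -- Perturbed GDA on f̃(x,y) = h(x)·y − (r_y/2) y²
    (hxrec : ∀ t, xs (t + 1) = xs t - c * (hOS' l Dy (xs t) * ys t))
    (hyrec : ∀ t, ys (t + 1) = projI Dy (ys t + α * (hOS l Dy (xs (t + 1)) - ry * ys t))) :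
    ∀ t : ℕ,
      (|xs t| ≤ 1 ∧ ys t ∈ Set.Icc 0 Dy) ∧
      (1 - l * c * Dy / (Dy + 1)) ^ t * |xs 0| ≤ |xs t| :=
  perturbed_gda_hard_os_trajectory_general l Dy ry α c xs ys hl hDy hc hlc hx0 hy0 hxrec hyrec
end
end

section
/- Lemma (Moreau envelope of the hard OS instance). Let ℓ, D_Y > 0 and let h be as in the hard OS instance. Set Φ(z) := max_{y∈[0,D_Y]} h(z)·y; then Φ(z) = D_Y·h(z) for all z ∈ ℝ. Moreover, for every x ∈ ℝ with |x| ≤ 1: min_{z∈ℝ} [ Φ(z) + ℓ(z − x)² ] = (ℓ·D_Y/(3D_Y + 2))·x², and the minimum is attained at z* = (2(D_Y + 1)/(3D_Y + 2))·x. -/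
/-!
For `y ∈ [0, D_Y]` the map `y ↦ h(z)·y` is monotone because `h ≥ 0`, so `Φ = D_Y·h`. On `[-1, 1]`
the objective `D_Y·h(z) + ℓ(z − x)²` is a quadratic whose completed square is centred at `z*`,
giving the value `ℓ D_Y x²/(3D_Y + 2)`. Outside `[-1, 1]` one has `h ≥ ℓ/(2(D_Y + 1))`, and
`D_Y·ℓ/(2(D_Y + 1))` already exceeds `ℓ D_Y/(3D_Y + 2) ≥ ℓ D_Y x²/(3D_Y + 2)`.
-/

noncomputable section

open Set

theorem sSup_image_const_mul_Icc {c D : ℝ} (hc : 0 ≤ c) (hD : 0 ≤ D) :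
    sSup ((fun y => c * y) '' Icc 0 D) = c * D :=
  ((monotone_mul_left_of_nonneg hc).monotoneOn _).map_isGreatest (isGreatest_Icc hD) |>.csSup_eq

section HardInstance

variable {l Dy z : ℝ}

theorem hOS_of_abs_le_one (hz : |z| ≤ 1) : hOS l Dy z = l / (2 * (Dy + 1)) * z ^ 2 := by
  rw [hOS, if_pos hz]

theorem le_hOS_of_one_lt_abs (hl : 0 ≤ l) (hDy : -1 < Dy) (hz : 1 < |z|) :
    l / (2 * (Dy + 1)) ≤ hOS l Dy z := by
  have hc : 0 ≤ l / (2 * (Dy + 1)) := div_nonneg hl (by linarith)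
  have htwice : l / (Dy + 1) = 2 * (l / (2 * (Dy + 1))) := by
    field_simp [show Dy + 1 ≠ 0 by linarith]
  rw [hOS, if_neg hz.not_ge, htwice]
  split_ifs with h2
  · have hsq : (|z| - 2) ^ 2 ≤ 1 := by nlinarith
    nlinarith [mul_le_mul_of_nonneg_left hsq hc]
  · linarith

theorem hOS_nonneg (hl : 0 ≤ l) (hDy : -1 < Dy) : 0 ≤ hOS l Dy z := by
  rcases le_or_gt |z| 1 with hz | hz
  · rw [hOS_of_abs_le_one hz]
    exact mul_nonneg (div_nonneg hl (by linarith)) (sq_nonneg z)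
  · exact (div_nonneg hl (by linarith)).trans (le_hOS_of_one_lt_abs hl hDy hz)

theorem PhiOS_eq_mul_hOS (hl : 0 ≤ l) (hDy : 0 ≤ Dy) (z : ℝ) :
    PhiOS l Dy z = Dy * hOS l Dy z := by
  rw [PhiOS, sSup_image_const_mul_Icc (hOS_nonneg hl (by linarith)) hDy, mul_comm]

theorem moreau_objective_eq_of_abs_le_one (hDy : 0 < Dy) (x : ℝ) (hz : |z| ≤ 1) :
    Dy * hOS l Dy z + l * (z - x) ^ 2 = l * Dy / (3 * Dy + 2) * x ^ 2
      + l / (2 * (Dy + 1) * (3 * Dy + 2)) * ((3 * Dy + 2) * z - 2 * (Dy + 1) * x) ^ 2 := by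
  rw [hOS_of_abs_le_one hz]
  field_simp [show Dy + 1 ≠ 0 by linarith, show 3 * Dy + 2 ≠ 0 by linarith]
  ring

theorem moreau_objective_lower_bound (hl : 0 < l) (hDy : 0 < Dy) {x : ℝ} (hx : |x| ≤ 1)
    (z : ℝ) : l * Dy / (3 * Dy + 2) * x ^ 2 ≤ Dy * hOS l Dy z + l * (z - x) ^ 2 := by
  rcases le_or_gt |z| 1 with hz | hz
  · rw [moreau_objective_eq_of_abs_le_one hDy x hz]
    exact le_add_of_nonneg_right (by positivity)
  · calc l * Dy / (3 * Dy + 2) * x ^ 2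
        ≤ l * Dy / (3 * Dy + 2) :=
          mul_le_of_le_one_right (by positivity) ((sq_le_one_iff_abs_le_one x).mpr hx)
      _ ≤ Dy * (l / (2 * (Dy + 1))) := by
          rw [mul_div_assoc', div_le_div_iff₀ (by linarith) (by linarith)]
          nlinarith [mul_pos (mul_pos hl hDy) hDy]
      _ ≤ Dy * hOS l Dy z :=
          mul_le_mul_of_nonneg_left (le_hOS_of_one_lt_abs hl.le (by linarith) hz) hDy.le
      _ ≤ Dy * hOS l Dy z + l * (z - x) ^ 2 := le_add_of_nonneg_right (by positivity)

theorem abs_moreau_minimizer_le_one (hDy : 0 < Dy) {x : ℝ} (hx : |x| ≤ 1) :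
    |2 * (Dy + 1) / (3 * Dy + 2) * x| ≤ 1 := by
  have hr : 2 * (Dy + 1) / (3 * Dy + 2) ≤ 1 := by rw [div_le_one (by linarith)]; linarith
  rw [abs_mul, abs_of_pos (by positivity)]
  exact mul_le_one₀ hr (abs_nonneg x) hx

end HardInstance

/-- Moreau envelope of the hard OS instance: `Φ(z) = D_Y·h(z)` and, for
`|x| ≤ 1`, `min_z [Φ(z) + ℓ(z − x)²] = (ℓ D_Y/(3D_Y + 2))·x²`, attained at
`z* = (2(D_Y + 1)/(3D_Y + 2))·x`. -/
theorem moreau_envelope_hard_os_instance (l Dy : ℝ) (hl : 0 < l) (hDy : 0 < Dy) :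
    (∀ z : ℝ, PhiOS l Dy z = Dy * hOS l Dy z) ∧
    ∀ x : ℝ, |x| ≤ 1 →
      (∀ z : ℝ,
        PhiOS l Dy (2 * (Dy + 1) / (3 * Dy + 2) * x)
            + l * (2 * (Dy + 1) / (3 * Dy + 2) * x - x) ^ 2
          ≤ PhiOS l Dy z + l * (z - x) ^ 2) ∧
      PhiOS l Dy (2 * (Dy + 1) / (3 * Dy + 2) * x)
          + l * (2 * (Dy + 1) / (3 * Dy + 2) * x - x) ^ 2
        = l * Dy / (3 * Dy + 2) * x ^ 2 := by
  have hPhi := PhiOS_eq_mul_hOS hl.le hDy.le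
  refine ⟨hPhi, fun x hx => ?_⟩
  have hval : PhiOS l Dy (2 * (Dy + 1) / (3 * Dy + 2) * x)
      + l * (2 * (Dy + 1) / (3 * Dy + 2) * x - x) ^ 2 = l * Dy / (3 * Dy + 2) * x ^ 2 := by
    rw [hPhi, moreau_objective_eq_of_abs_le_one hDy x (abs_moreau_minimizer_le_one hDy hx)]
    field_simp [show 3 * Dy + 2 ≠ 0 by linarith]
    ring
  refine ⟨fun z => ?_, hval⟩
  rw [hval, hPhi]
  exact moreau_objective_lower_bound hl hDy hx z
end
end
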